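/- Let ℓ be a prime and let p be a prime such that p ≡ β² (mod 4ℓ) for some odd integer β. Then p is ℓ-Genocchi irregular. -/

import Mathlib

/-!
Write `p = 4t + 1`, which is forced since `β² ≡ 1 (mod 8)`, and take `k = t`, so that
`G_{2t} = -ℓ(ℓ^{(p-1)/2} - 1) B_{2t}`. The congruence makes `ℓ` a square modulo `p`: for `ℓ = 2`
because `p ≡ 1 (mod 8)`, for odd `ℓ` by quadratic reciprocity since `p ≡ 1 (mod 4)` and `p` is a
square modulo `ℓ`. Euler's criterion then gives `p ∣ ℓ(ℓ^{(p-1)/2} - 1)`. As `p - 1 ∤ 2t`, von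
Staudt–Clausen shows that `B_{2t}` is `p`-integral, and `B_{2t} ≠ 0` because `ζ(2t) ≠ 0`.
-/

/-- The `ℓ`-Genocchi number `G_{2n} = ℓ(1 - ℓ^{2n})B_{2n}` (an integer). -/
noncomputable def Gnum (ℓ : ℕ) (n : ℕ) : ℚ :=
  (ℓ : ℚ) * (1 - (ℓ : ℚ) ^ (2 * n)) * bernoulli (2 * n)

/-- An odd prime `p` is `ℓ`-Genocchi irregular if `p` divides one of
`G_2, G_4, …, G_{p-3}`, i.e. `ν_p(G_{2k}) ≥ 1` for some `1 ≤ k ≤ (p-3)/2`. -/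
noncomputable def GenocchiIrregular (ℓ : ℕ) (p : ℕ) : Prop :=
  ∃ k : ℕ, 1 ≤ k ∧ k ≤ (p - 3) / 2 ∧ 1 ≤ padicValRat p (Gnum ℓ k)

open Finset

theorem padicValRat_nonneg_of_not_dvd_den {p : ℕ} {x : ℚ} (hx : ¬ p ∣ x.den) :
    0 ≤ padicValRat p x := by
  rw [padicValRat_def, padicValNat.eq_zero_of_not_dvd hx]
  simp [padicValInt]

theorem one_le_padicValRat_intCast_mul {p : ℕ} [Fact p.Prime] {n : ℤ} {x : ℚ} (hn : n ≠ 0)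
    (hpn : (p : ℤ) ∣ n) (hx : x ≠ 0) (hxden : ¬ p ∣ x.den) : 1 ≤ padicValRat p (n * x) := by
  have hvn : 1 ≤ padicValInt p n :=
    ((padicValInt_dvd_iff 1 n).mp (by simpa using hpn)).resolve_left hn
  have hvx := padicValRat_nonneg_of_not_dvd_den hxden
  rw [padicValRat.mul (Int.cast_ne_zero.mpr hn) hx, padicValRat.of_int]
  omega

theorem Bernoulli.not_dvd_den_bernoulli_two_mul {p k : ℕ} (hp : p.Prime)
    (hpk : ¬ (p - 1) ∣ 2 * k) : ¬ p ∣ (bernoulli (2 * k)).den := by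
  obtain ⟨z, hz⟩ := Bernoulli.vonStaudt_clausen k
  set S := {q ∈ range (2 * k + 2) | q.Prime ∧ (q - 1) ∣ 2 * k}
  have hB : bernoulli (2 * k) = z - ∑ q ∈ S, (1 : ℚ) / q := by rw [hz]; ring
  have hden : (bernoulli (2 * k)).den ∣ ∏ q ∈ S, q := by
    refine hB ▸ (Rat.sub_den_dvd _ _).trans ?_
    rw [Rat.den_intCast, one_mul]
    refine (Rat.den_sum_dvd_prod_den _ _).trans (dvd_of_eq (prod_congr rfl fun q hq => ?_))
    rw [one_div, Rat.inv_natCast_den, if_neg (mem_filter.mp hq).2.1.ne_zero]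
  intro hdvd
  obtain ⟨q, hqS, hpq⟩ := (Prime.dvd_finsetProd_iff hp.prime _).mp (hdvd.trans hden)
  obtain ⟨-, hq, hqk⟩ := mem_filter.mp hqS
  exact hpk ((Nat.prime_dvd_prime_iff_eq hp hq).mp hpq ▸ hqk)

theorem bernoulli_two_mul_ne_zero {k : ℕ} (hk : k ≠ 0) : bernoulli (2 * k) ≠ 0 := by
  intro h
  apply riemannZeta_ne_zero_of_one_lt_re (s := 2 * k)
  · norm_cast; omega
  · rw [riemannZeta_two_mul_nat hk, h]; simp

theorem Int.sq_modEq_one_mod_eight_of_odd {β : ℤ} (hβ : Odd β) : β ^ 2 ≡ 1 [ZMOD 8] := by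
  obtain ⟨c, rfl⟩ := hβ
  obtain ⟨d, hd⟩ := Int.even_mul_succ_self c
  exact (Int.modEq_iff_dvd.mpr ⟨d, by linear_combination 4 * hd⟩).symm

theorem mod_four_eq_one_of_modEq_odd_sq {p : ℕ} {m β : ℤ} (hβ : Odd β)
    (h : (p : ℤ) ≡ β ^ 2 [ZMOD 4 * m]) : p % 4 = 1 := by
  have h4 : (p : ℤ) ≡ 1 [ZMOD 4] :=
    (h.of_mul_right m).trans ((Int.sq_modEq_one_mod_eight_of_odd hβ).of_dvd (by norm_num))
  unfold Int.ModEq at h4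
  omega

theorem isSquare_natCast_zmod_of_modEq_odd_sq {ℓ p : ℕ} [Fact ℓ.Prime] [Fact p.Prime] {β : ℤ}
    (hβ : Odd β) (h : (p : ℤ) ≡ β ^ 2 [ZMOD 4 * ℓ]) : IsSquare (ℓ : ZMod p) := by
  have hp4 := mod_four_eq_one_of_modEq_odd_sq hβ h
  rcases eq_or_ne ℓ 2 with rfl | hℓ
  · have h8 : (p : ℤ) ≡ 1 [ZMOD 8] := h.trans (Int.sq_modEq_one_mod_eight_of_odd hβ)
    unfold Int.ModEq at h8
    exact_mod_cast (ZMod.exists_sq_eq_two_iff (by omega)).mpr (Or.inl (by omega))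
  · rw [ZMod.exists_sq_eq_prime_iff_of_mod_four_eq_one hp4 hℓ]
    have hpβ : ((p : ℤ) : ZMod ℓ) = ((β ^ 2 : ℤ) : ZMod ℓ) :=
      (ZMod.intCast_eq_intCast_iff _ _ _).mpr (h.of_mul_left 4)
    push_cast at hpβ
    exact ⟨β, by rw [hpβ, sq]⟩

theorem ZMod.intCast_dvd_mul_pow_half_sub_one_of_isSquare {p : ℕ} [Fact p.Prime] {a : ℤ}
    (ha : IsSquare (a : ZMod p)) : (p : ℤ) ∣ a * (a ^ (p / 2) - 1) := by
  rw [← ZMod.intCast_zmod_eq_zero_iff_dvd]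
  push_cast
  rcases eq_or_ne (a : ZMod p) 0 with h0 | h0
  · rw [h0, zero_mul]
  · rw [(ZMod.euler_criterion p h0).mp ha, sub_self, mul_zero]

/-- Let `ℓ` be a prime and `p` a prime congruent to the square of an odd integer
modulo `4ℓ`. Then `p` is `ℓ`-Genocchi irregular. -/
theorem genocchiIrregular_of_odd_square_mod (ℓ p : ℕ) (hℓ : ℓ.Prime)
    (hp : p.Prime) (h : ∃ β : ℤ, Odd β ∧ (p : ℤ) ≡ β ^ 2 [ZMOD (4 * ℓ)]) :
    GenocchiIrregular ℓ p := by
  obtain ⟨β, hβ, hcong⟩ := h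
  have : Fact ℓ.Prime := ⟨hℓ⟩
  have : Fact p.Prime := ⟨hp⟩
  obtain ⟨t, ht⟩ : ∃ t, p = 4 * t + 1 :=
    ⟨p / 4, by have := mod_four_eq_one_of_modEq_odd_sq hβ hcong; omega⟩
  have ht0 : t ≠ 0 := by rintro rfl; exact hp.ne_one ht
  refine ⟨t, by omega, by omega, ?_⟩
  have hdvd : (p : ℤ) ∣ ℓ * ((ℓ : ℤ) ^ (2 * t) - 1) := by
    rw [show 2 * t = p / 2 by omega]
    exact ZMod.intCast_dvd_mul_pow_half_sub_one_of_isSquare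
      (by exact_mod_cast isSquare_natCast_zmod_of_modEq_odd_sq hβ hcong)
  have hN : -((ℓ : ℤ) * ((ℓ : ℤ) ^ (2 * t) - 1)) ≠ 0 := by
    have hpow : 1 < ℓ ^ (2 * t) := Nat.one_lt_pow (by omega) hℓ.one_lt
    exact neg_ne_zero.mpr (mul_ne_zero (mod_cast hℓ.ne_zero) (sub_ne_zero.mpr (mod_cast hpow.ne')))
  have hG : Gnum ℓ t = ((-((ℓ : ℤ) * ((ℓ : ℤ) ^ (2 * t) - 1)) : ℤ) : ℚ) * bernoulli (2 * t) := by
    rw [Gnum]; push_cast; ring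
  rw [hG]
  refine one_le_padicValRat_intCast_mul hN (dvd_neg.mpr hdvd) (bernoulli_two_mul_ne_zero ht0)
    (Bernoulli.not_dvd_den_bernoulli_two_mul hp fun h2t => ?_)
  have := Nat.le_of_dvd (by omega) h2t
  omega
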